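/- arXiv:2412.07690 — 3 statements merged into one kernel-verified Lean document; each statement's English description precedes it below -/
import Mathlib

section
/- Let X be a separable Banach space, (xₙ) ⊂ X with ∑ cₙ‖xₙ‖ < ∞ for positive reals cₙ, and Y the closed span of {xₙ : n ≥ 1}. If S = ∑ₙ Aₙ cₙ xₙ with (Aₙ) i.i.d. standard normal, then for every nonempty open subset O of Y, P[S ∈ O] > 0. -/
/-!
Pick `y ∈ V ∩ Y` and `r > 0` with `EMetric.ball y r ⊆ V`, and write `uₙ = cₙ • xₙ`. Choose `N` so
large that some combination `∑_{n<N} tₙ uₙ` lies within `r / 2` of `y` and the expected tail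
`E ∑_{n≥N} |Aₙ| ‖uₙ‖` is below `r / 2`. The event that the head `∑_{n<N} Aₙ uₙ` is within `r / 2`
of `y` has positive probability, since the law of `(A₀, …, A_{N-1})` is a product of Gaussians and
so charges every nonempty open set; the event that `∑_{n≥N} |Aₙ| ‖uₙ‖ < r / 2` has positive
probability by Markov's inequality. These two events are independent, and on their intersection
`S` lies in `EMetric.ball y r`. Finally `S ∈ Y` almost surely, as a limit of elements of the span.
-/

open MeasureTheory ProbabilityTheory Filter Finset
open scoped ENNReal Topology

instance isOpenPosMeasure_gaussianReal (μ : ℝ) (v : NNReal) [NeZero v] :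
    Measure.IsOpenPosMeasure (gaussianReal μ v) :=
  (gaussianReal_absolutelyContinuous' μ (NeZero.ne v)).isOpenPosMeasure

lemma lintegral_enorm_gaussianReal_ne_top (μ : ℝ) (v : NNReal) :
    ∫⁻ t, ‖t‖ₑ ∂gaussianReal μ v ≠ ∞ :=
  ((memLp_id_gaussianReal 1).integrable le_rfl).2.ne

lemma measure_lt_pos_of_lintegral_lt {α : Type*} [MeasurableSpace α] {μ : Measure α}
    [IsProbabilityMeasure μ] {f : α → ℝ≥0∞} {d : ℝ≥0∞} (h : ∫⁻ a, f a ∂μ < d) :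
    0 < μ {a | f a < d} := by
  refine pos_iff_ne_zero.2 fun h0 => h.not_ge ?_
  have hge : ∀ᵐ a ∂μ, d ≤ f a := ae_iff.2 (by simpa only [not_le] using h0)
  simpa using lintegral_mono_ae hge

lemma enorm_sub_sum_range_le_tsum {E : Type*} [NormedAddCommGroup E] {f : ℕ → E} {s : E}
    (hs : Tendsto (fun M => ∑ n ∈ range M, f n) atTop (𝓝 s)) (N : ℕ) :
    ‖s - ∑ n ∈ range N, f n‖ₑ ≤ ∑' k, ‖f (k + N)‖ₑ := by
  have htail :
      Tendsto (fun M => ∑ k ∈ range M, f (k + N)) atTop (𝓝 (s - ∑ n ∈ range N, f n)) := by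
    refine ((hs.comp (tendsto_add_atTop_nat N)).sub_const _).congr fun M => ?_
    simp only [Function.comp_apply]
    rw [add_comm M N, sum_range_add, add_sub_cancel_left]
    simp only [add_comm N]
  refine le_of_tendsto' htail.enorm fun M => ?_
  exact (enorm_sum_le (range M) fun k => f (k + N)).trans (ENNReal.sum_le_tsum _)

lemma edist_lt_add_of_tendsto_sum_range {E : Type*} [NormedAddCommGroup E] {f : ℕ → E} {s y : E}
    (hs : Tendsto (fun M => ∑ n ∈ range M, f n) atTop (𝓝 s)) {N : ℕ} {a b : ℝ≥0∞}
    (hhead : edist (∑ n ∈ range N, f n) y < a) (htail : ∑' k, ‖f (k + N)‖ₑ < b) :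
    edist s y < a + b :=
  calc edist s y ≤ edist s (∑ n ∈ range N, f n) + edist (∑ n ∈ range N, f n) y :=
        edist_triangle _ _ _
    _ < b + a := ENNReal.add_lt_add
        ((edist_eq_enorm_sub _ _).trans_lt ((enorm_sub_sum_range_le_tsum hs N).trans_lt htail))
        hhead
    _ = a + b := add_comm b a

lemma Submodule.span_range_smul_of_ne_zero {R M ι : Type*} [DivisionRing R] [AddCommGroup M]
    [Module R M] {c : ι → R} (hc : ∀ i, c i ≠ 0) (v : ι → M) :
    span R (Set.range fun i => c i • v i) = span R (Set.range v) := by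
  refine le_antisymm (span_le.2 ?_) (span_le.2 ?_)
  · rintro _ ⟨i, rfl⟩
    exact smul_mem _ _ (subset_span ⟨i, rfl⟩)
  · rintro _ ⟨i, rfl⟩
    simpa [smul_smul, inv_mul_cancel₀ (hc i)] using
      smul_mem (span R (Set.range fun i => c i • v i)) (c i)⁻¹ (subset_span ⟨i, rfl⟩)

lemma eventually_exists_edist_sum_range_lt {E : Type*} [SeminormedAddCommGroup E]
    [NormedSpace ℝ E] {u : ℕ → E} {y : E}
    (hy : y ∈ closure (Submodule.span ℝ (Set.range u) : Set E)) {ε : ℝ≥0∞} (hε : 0 < ε) :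
    ∀ᶠ N in atTop, ∃ t : ℕ → ℝ, edist (∑ n ∈ range N, t n • u n) y < ε := by
  obtain ⟨z, hz, hzy⟩ := EMetric.mem_closure_iff.1 hy ε hε
  obtain ⟨t, rfl⟩ := Finsupp.mem_span_range_iff_exists_finsupp.1 hz
  refine eventually_atTop.2 ⟨t.support.sup id + 1, fun N hN => ⟨t, ?_⟩⟩
  rwa [Finsupp.sum_of_support_subset t (fun n hn => mem_range.2 ?_) _ fun n _ => zero_smul ℝ (u n),
    edist_comm] at hzy
  exact (Nat.lt_succ_of_le (le_sup (f := id) hn)).trans_le hN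

namespace ProbabilityTheory

variable {Ω ι : Type*} {mΩ : MeasurableSpace Ω} {P : Measure Ω}

section Blocks

variable {𝓧 : Type*} [m𝓧 : MeasurableSpace 𝓧] {X : ι → Ω → 𝓧}

lemma measurable_iSup_comap_of_mem {S : Set ι} {i : ι} (hi : i ∈ S) :
    Measurable[⨆ j ∈ S, m𝓧.comap (X j)] (X i) :=
  Measurable.of_comap_le (le_iSup₂ (f := fun j (_ : j ∈ S) => m𝓧.comap (X j)) i hi)

lemma iIndepFun.indepFun_of_measurable_iSup {β γ : Type*} [MeasurableSpace β] [MeasurableSpace γ]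
    (hX : iIndepFun X P) (hmeas : ∀ i, Measurable (X i)) {S T : Set ι} (hST : Disjoint S T)
    {f : Ω → β} {g : Ω → γ} (hf : Measurable[⨆ i ∈ S, m𝓧.comap (X i)] f)
    (hg : Measurable[⨆ i ∈ T, m𝓧.comap (X i)] g) :
    IndepFun f g P := by
  rw [IndepFun_iff_Indep]
  exact indep_of_indep_of_le_right (indep_of_indep_of_le_left
    (indep_iSup_of_disjoint (fun i => (hmeas i).comap_le) hX.iIndep hST) hf.comap_le) hg.comap_le

lemma iIndepFun.measure_preimage_restrict_pos [TopologicalSpace 𝓧] [SecondCountableTopology 𝓧]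
    [BorelSpace 𝓧] [IsProbabilityMeasure P] (hX : iIndepFun X P) (hmeas : ∀ i, Measurable (X i))
    (hpos : ∀ i, (P.map (X i)).IsOpenPosMeasure) (s : Finset ι) {U : Set (s → 𝓧)}
    (hU : IsOpen U) (hne : U.Nonempty) :
    0 < P ((fun ω (i : s) => X i ω) ⁻¹' U) := by
  have _ i := Measure.isProbabilityMeasure_map (hmeas i).aemeasurable (μ := P)
  have hlaw : P.map (fun ω (i : s) => X i ω) = Measure.pi fun i : s => P.map (X i) :=
    (iIndepFun_iff_finset.1 hX s).map_fun_eq_pi_map fun i => (hmeas i).aemeasurable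
  rw [← Measure.map_apply (measurable_pi_lambda (fun ω (i : s) => X i ω) fun i => hmeas i)
    hU.measurableSet, hlaw]
  exact hU.measure_pos _ hne

end Blocks

lemma lintegral_tsum_enorm_mul [Countable ι] {A : ι → Ω → ℝ} {ν : Measure ℝ}
    (hmeas : ∀ i, Measurable (A i)) (hlaw : ∀ i, P.map (A i) = ν) (w : ι → ℝ≥0∞) :
    ∫⁻ ω, ∑' i, ‖A i ω‖ₑ * w i ∂P = (∫⁻ t, ‖t‖ₑ ∂ν) * ∑' i, w i := by
  rw [lintegral_tsum fun i => ((hmeas i).enorm.mul_const _).aemeasurable, ← ENNReal.tsum_mul_left]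
  refine tsum_congr fun i => ?_
  rw [lintegral_mul_const _ (hmeas i).enorm, ← hlaw i, lintegral_map measurable_enorm (hmeas i)]

theorem measure_edist_lt_pos_of_mem_closure_span [IsProbabilityMeasure P]
    {E : Type*} [NormedAddCommGroup E] [NormedSpace ℝ E]
    {A : ℕ → Ω → ℝ} (hmeas : ∀ n, Measurable (A n)) (hindep : iIndepFun A P)
    {ν : Measure ℝ} [ν.IsOpenPosMeasure] (hlaw : ∀ n, P.map (A n) = ν)
    (hν : ∫⁻ t, ‖t‖ₑ ∂ν ≠ ∞) {u : ℕ → E} (hu : Summable fun n => ‖u n‖) {S : Ω → E}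
    (hS : ∀ᵐ ω ∂P, Tendsto (fun N => ∑ n ∈ range N, A n ω • u n) atTop (𝓝 (S ω)))
    {y : E} (hy : y ∈ closure (Submodule.span ℝ (Set.range u) : Set E)) {r : ℝ≥0∞} (hr : 0 < r) :
    0 < P {ω | edist (S ω) y < r} := by
  have hr2 : 0 < r / 2 := ENNReal.half_pos hr.ne'
  have htail : Tendsto (fun N => (∫⁻ t, ‖t‖ₑ ∂ν) * ∑' k, ‖u (k + N)‖ₑ) atTop (𝓝 0) := by
    simpa using ENNReal.Tendsto.const_mul
      (ENNReal.tendsto_sum_nat_add _ (tsum_enorm_ne_top_iff_summable_norm.2 hu)) (Or.inr hν)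
  obtain ⟨N, ⟨t, ht⟩, hN⟩ := ((eventually_exists_edist_sum_range_lt hy hr2).and
    (htail.eventually (gt_mem_nhds hr2))).exists
  set head : Ω → (range N → ℝ) := fun ω i => A i ω
  set tail : Ω → ℝ≥0∞ := fun ω => ∑' k, ‖A (k + N) ω‖ₑ * ‖u (k + N)‖ₑ
  set U : Set (range N → ℝ) := {s | edist (∑ i, s i • u i) y < r / 2}
  have hU : IsOpen U := isOpen_lt (by fun_prop) continuous_const
  have hhead : 0 < P (head ⁻¹' U) := by
    refine hindep.measure_preimage_restrict_pos hmeas (fun n => hlaw n ▸ inferInstance) _ hU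
      ⟨fun i => t i, ?_⟩
    simpa only [U, Set.mem_ofPred_eq, sum_coe_sort (range N) fun n => t n • u n] using ht
  have htail_pos : 0 < P (tail ⁻¹' Set.Iio (r / 2)) := by
    refine measure_lt_pos_of_lintegral_lt ?_
    rwa [lintegral_tsum_enorm_mul (fun k => hmeas (k + N)) (fun k => hlaw (k + N))]
  have hindep_head_tail : IndepFun head tail P := by
    refine hindep.indepFun_of_measurable_iSup hmeas (S := ↑(range N)) (T := Set.Ici N) ?_ ?_ ?_
    · simp [Set.disjoint_left]
    · let := ⨆ i ∈ (range N : Set ℕ), MeasurableSpace.comap (A i) inferInstance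
      exact measurable_pi_lambda _ fun i => measurable_iSup_comap_of_mem (mem_coe.2 i.2)
    · let := ⨆ i ∈ Set.Ici N, MeasurableSpace.comap (A i) inferInstance
      exact Measurable.tsum fun k =>
        (measurable_iSup_comap_of_mem (Set.mem_Ici.2 (Nat.le_add_left N k))).enorm.mul_const _
  have hboth : 0 < P (head ⁻¹' U ∩ tail ⁻¹' Set.Iio (r / 2)) := by
    rw [hindep_head_tail.measure_inter_preimage_eq_mul _ _ hU.measurableSet measurableSet_Iio]
    exact ENNReal.mul_pos hhead.ne' htail_pos.ne'
  refine hboth.trans_le (measure_mono_ae (hS.mono fun ω hω hmem => ?_))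
  obtain ⟨hωU, hωT⟩ := hmem
  show edist (S ω) y < r
  rw [← ENNReal.add_halves r]
  refine edist_lt_add_of_tendsto_sum_range hω ?_
    (by simpa only [enorm_smul] using Set.mem_Iio.1 hωT)
  simpa only [Set.mem_preimage, U, Set.mem_ofPred_eq, head,
    sum_coe_sort (range N) fun n => A n ω • u n] using hωU

end ProbabilityTheory

theorem rand_series_full_support_general
    {Ω : Type*} [MeasureSpace Ω] [IsProbabilityMeasure (ℙ : Measure Ω)]
    {X : Type*} [NormedAddCommGroup X] [NormedSpace ℝ X]
    (A : ℕ → Ω → ℝ) (hmeas : ∀ n, Measurable (A n))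
    (hindep : iIndepFun A ℙ)
    (hgauss : ∀ n, Measure.map (A n) ℙ = gaussianReal 0 1)
    (c : ℕ → ℝ) (hc : ∀ n, 0 < c n) (x : ℕ → X)
    (hsum : Summable fun n => c n * ‖x n‖)
    (S : Ω → X)
    (hS : ∀ᵐ ω ∂ℙ,
      Tendsto (fun N => ∑ n ∈ Finset.range N, A n ω • (c n • x n)) atTop (nhds (S ω)))
    (Y : Set X) (hY : Y = closure (Submodule.span ℝ (Set.range x) : Set X))
    (V : Set X) (hV : IsOpen V) (hne : (V ∩ Y).Nonempty) :
    0 < ℙ {ω | S ω ∈ V ∩ Y} := by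
  obtain ⟨y, hyV, hyY⟩ := hne
  obtain ⟨r, hr, hball⟩ := EMetric.isOpen_iff.1 hV y hyV
  have hspan : Submodule.span ℝ (Set.range fun n => c n • x n) = Submodule.span ℝ (Set.range x) :=
    Submodule.span_range_smul_of_ne_zero (fun n => (hc n).ne') x
  have hu : Summable fun n => ‖c n • x n‖ :=
    hsum.congr fun n => by rw [norm_smul, Real.norm_of_nonneg (hc n).le]
  have hSY : ∀ᵐ ω ∂ℙ, S ω ∈ Y := hS.mono fun ω hω => hY ▸ hspan ▸
    mem_closure_of_tendsto hω (Eventually.of_forall fun N =>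
      Submodule.sum_mem _ fun n _ => Submodule.smul_mem _ _ (Submodule.subset_span ⟨n, rfl⟩))
  refine (measure_edist_lt_pos_of_mem_closure_span hmeas hindep hgauss
    (lintegral_enorm_gaussianReal_ne_top 0 1) hu hS (by rwa [hspan, ← hY]) hr).trans_le
    (measure_mono_ae ?_)
  filter_upwards [hSY] with ω hω hlt using ⟨hball hlt, hω⟩

/-- Support theorem: the a.s. limit `S = ∑ₙ Aₙ cₙ xₙ` charges every nonempty
(relatively) open subset of the closed span `Y` of the `xₙ`. -/
theorem rand_series_full_support
    {Ω : Type*} [MeasureSpace Ω] [IsProbabilityMeasure (ℙ : Measure Ω)]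
    {X : Type*} [NormedAddCommGroup X] [NormedSpace ℝ X] [CompleteSpace X]
    [TopologicalSpace.SeparableSpace X]
    (A : ℕ → Ω → ℝ) (hmeas : ∀ n, Measurable (A n))
    (hindep : iIndepFun A ℙ)
    (hgauss : ∀ n, Measure.map (A n) ℙ = gaussianReal 0 1)
    (c : ℕ → ℝ) (hc : ∀ n, 0 < c n) (x : ℕ → X)
    (hsum : Summable fun n => c n * ‖x n‖)
    (S : Ω → X)
    (hS : ∀ᵐ ω ∂ℙ,
      Tendsto (fun N => ∑ n ∈ Finset.range N, A n ω • (c n • x n)) atTop (nhds (S ω)))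
    (Y : Set X) (hY : Y = closure (Submodule.span ℝ (Set.range x) : Set X))
    (V : Set X) (hV : IsOpen V) (hne : (V ∩ Y).Nonempty) :
    0 < ℙ {ω | S ω ∈ V ∩ Y} :=
  rand_series_full_support_general A hmeas hindep hgauss c hc x hsum S hS Y hY V hV hne
end

section
/- Let K : ℝ^m → ℝ be a Schwartz function, r₀ ∈ (0,1). For R > 0 define K^R(z) = ∑_{k∈ℤ^m} K(Rk − z). Then for every p > m there exists C = C(p,m,K,r₀) > 0, independent of R, such that for all R > 2 and all z with |z|_∞ ≤ R·r₀, one has |K^R(z)| ≤ C·(1 + |z|_∞)^{−p}. -/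
/-!
On the box `‖z‖ ≤ R r₀` with `R ≥ 1`, the triangle inequality gives
`‖Rk - z‖ ≥ (1 - r₀) R ‖k‖` for every lattice point `k ≠ 0`, so `1 + ‖Rk - z‖` dominates
`(1 + ‖k‖)(1 + ‖z‖)` up to the factor `(1 - r₀) / 4`. Since a Schwartz function decays like
`(1 + ‖w‖)^(-q)` for every `q`, choosing `q ≥ p` with `q > m` bounds each term of the
periodization by `(1 + ‖k‖)^(-q) (1 + ‖z‖)^(-q)`, and the lattice sum of `(1 + ‖k‖)^(-q)`
converges.
-/

open Filter Submodule
open scoped SchwartzMap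

theorem SchwartzMap.exists_norm_le_mul_one_add_norm_rpow_neg {E F : Type*}
    [NormedAddCommGroup E] [NormedSpace ℝ E] [NormedAddCommGroup F] [NormedSpace ℝ F]
    (f : 𝓢(E, F)) (s : ℝ) : ∃ C > 0, ∀ x, ‖f x‖ ≤ C * (1 + ‖x‖) ^ (-s) := by
  obtain ⟨k, hk⟩ := exists_nat_ge s
  set C := 2 ^ k * (Finset.Iic (k, 0)).sup (fun m => SchwartzMap.seminorm ℝ m.1 m.2) f
  have hC : 0 ≤ C := mul_nonneg (by positivity) (apply_nonneg _ _)
  refine ⟨C + 1, by positivity, fun x => ?_⟩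
  have hdecay : (1 + ‖x‖) ^ k * ‖f x‖ ≤ C := by
    simpa using f.one_add_le_sup_seminorm_apply (𝕜 := ℝ) (m := (k, 0)) le_rfl le_rfl x
  have hx : 1 ≤ 1 + ‖x‖ := le_add_of_nonneg_right (norm_nonneg x)
  calc ‖f x‖ = (1 + ‖x‖) ^ k * ‖f x‖ * (1 + ‖x‖) ^ (-(k : ℝ)) := by
        rw [Real.rpow_neg (by positivity), Real.rpow_natCast]
        field_simp
    _ ≤ (C + 1) * (1 + ‖x‖) ^ (-s) := by
        gcongr
        linarith

theorem summable_one_add_norm_intCast_rpow_neg {ι : Type*} [Fintype ι] {s : ℝ}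
    (hs : Fintype.card ι < s) :
    Summable fun k : ι → ℤ => (1 + ‖(fun i => (k i : ℝ))‖) ^ (-s) := by
  let b := (Pi.basisFun ℝ ι).restrictScalars ℤ
  have hrank : Module.finrank ℤ (span ℤ (Set.range (Pi.basisFun ℝ ι))) = Fintype.card ι :=
    Module.finrank_eq_card_basis b
  have hcoe (k : ι → ℤ) : ((b.equivFun.symm k : span ℤ _) : ι → ℝ) = fun i => (k i : ℝ) := by
    ext j
    classical simp [b, Module.Basis.equivFun_symm_apply, Pi.basisFun_apply, Pi.single_apply]
  have hL := (ZLattice.summable_norm_rpow _ (-s) (by rw [hrank]; linarith)).comp_injective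
    b.equivFun.symm.injective
  refine hL.of_norm_bounded_eventually ?_
  filter_upwards [eventually_cofinite_ne 0] with k hk
  simp only [Function.comp_apply, Submodule.coe_norm, hcoe]
  have hpos : 0 < ‖(fun i => (k i : ℝ))‖ :=
    norm_pos_iff.mpr fun h => hk (funext fun i => by simpa using congrFun h i)
  rw [Real.norm_of_nonneg (by positivity)]
  exact Real.rpow_le_rpow_of_nonpos hpos (by linarith)
    (by linarith [(Nat.cast_nonneg _ : (0 : ℝ) ≤ Fintype.card ι)])

theorem intCast_eq_zero_or_one_le_norm {ι : Type*} [Fintype ι] (k : ι → ℤ) :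
    (fun i => (k i : ℝ)) = 0 ∨ 1 ≤ ‖(fun i => (k i : ℝ))‖ := by
  rcases eq_or_ne k 0 with rfl | hk
  · exact Or.inl (funext fun _ => Int.cast_zero)
  obtain ⟨i, hi⟩ := Function.ne_iff.mp hk
  refine Or.inr ?_
  calc (1 : ℝ) ≤ |(k i : ℝ)| := by exact_mod_cast Int.one_le_abs hi
    _ ≤ ‖(fun i => (k i : ℝ))‖ := by
        simpa only [Real.norm_eq_abs] using norm_le_pi_norm (fun j => (k j : ℝ)) i

section Separation

variable {E : Type*} [SeminormedAddCommGroup E] [NormedSpace ℝ E] {x z : E} {R r : ℝ}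

theorem mul_one_add_norm_mul_one_add_norm_le (hx : x = 0 ∨ 1 ≤ ‖x‖) (hR : 1 ≤ R)
    (hz : ‖z‖ ≤ R * r) :
    (1 - r) / 4 * ((1 + ‖x‖) * (1 + ‖z‖)) ≤ 1 + ‖R • x - z‖ := by
  have hr : 0 ≤ r := nonneg_of_mul_nonneg_right ((norm_nonneg z).trans hz) (by linarith)
  rcases hx with rfl | hx
  · simp only [norm_zero, smul_zero, zero_sub, norm_neg]
    nlinarith [norm_nonneg z]
  rcases le_or_gt 1 r with hr₁ | hr₁
  · have : (1 - r) / 4 * ((1 + ‖x‖) * (1 + ‖z‖)) ≤ 0 :=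
      mul_nonpos_of_nonpos_of_nonneg (by linarith) (by positivity)
    linarith [norm_nonneg (R • x - z)]
  have htri : R * ‖x‖ - ‖z‖ ≤ ‖R • x - z‖ := by
    have := norm_sub_norm_le (R • x) z
    rwa [norm_smul, Real.norm_of_nonneg (by linarith)] at this
  calc (1 - r) / 4 * ((1 + ‖x‖) * (1 + ‖z‖)) ≤ (1 - r) / 4 * ((2 * ‖x‖) * (2 * R)) := by
        gcongr <;> nlinarith
    _ ≤ R * ‖x‖ - R * r := by
        nlinarith [mul_nonneg (mul_nonneg hr (by linarith : 0 ≤ R)) (sub_nonneg.mpr hx)]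
    _ ≤ 1 + ‖R • x - z‖ := by linarith

theorem norm_apply_smul_sub_le {F : Type*} [SeminormedAddCommGroup F] {f : E → F} {C q : ℝ}
    (hC : 0 ≤ C) (hq : 0 ≤ q) (hf : ∀ w, ‖f w‖ ≤ C * (1 + ‖w‖) ^ (-q))
    (hx : x = 0 ∨ 1 ≤ ‖x‖) (hR : 1 ≤ R) (hr : r < 1) (hz : ‖z‖ ≤ R * r) :
    ‖f (R • x - z)‖ ≤ C * ((1 - r) / 4) ^ (-q) * (1 + ‖x‖) ^ (-q) * (1 + ‖z‖) ^ (-q) := by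
  have hc : 0 < (1 - r) / 4 := by linarith
  calc ‖f (R • x - z)‖ ≤ C * (1 + ‖R • x - z‖) ^ (-q) := hf _
    _ ≤ C * ((1 - r) / 4 * ((1 + ‖x‖) * (1 + ‖z‖))) ^ (-q) :=
        mul_le_mul_of_nonneg_left (Real.rpow_le_rpow_of_nonpos (by positivity)
          (mul_one_add_norm_mul_one_add_norm_le hx hR hz) (by linarith)) hC
    _ = C * ((1 - r) / 4) ^ (-q) * (1 + ‖x‖) ^ (-q) * (1 + ‖z‖) ^ (-q) := by
        rw [Real.mul_rpow hc.le (by positivity), Real.mul_rpow (by positivity) (by positivity)]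
        ring

end Separation

theorem periodization_decay_general
    (m : ℕ) (K : SchwartzMap (Fin m → ℝ) ℝ) (r₀ : ℝ) (hr₁ : r₀ < 1)
    (p : ℝ) :
    ∃ C > 0, ∀ R : ℝ, 2 < R → ∀ z : Fin m → ℝ, ‖z‖ ≤ R * r₀ →
      |∑' k : Fin m → ℤ, K (fun i => R * (k i : ℝ) - z i)| ≤ C * (1 + ‖z‖) ^ (-p) := by
  set q := max p (m + 1)
  have hq : 0 ≤ q := le_max_of_le_right (by positivity)
  obtain ⟨C₀, hC₀, hK⟩ := K.exists_norm_le_mul_one_add_norm_rpow_neg q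
  have hsum := summable_one_add_norm_intCast_rpow_neg (ι := Fin m) (s := q) (by simp [q])
  set S := ∑' k : Fin m → ℤ, (1 + ‖(fun i => (k i : ℝ))‖) ^ (-q)
  have hS : 0 < S := hsum.tsum_pos (fun _ => by positivity) 0 (by positivity)
  have hc : 0 < (1 - r₀) / 4 := by linarith
  refine ⟨C₀ * ((1 - r₀) / 4) ^ (-q) * S, by positivity, fun R hR z hz => ?_⟩
  have hterm (k : Fin m → ℤ) := norm_apply_smul_sub_le (x := fun i => (k i : ℝ)) hC₀.le hq hK
    (intCast_eq_zero_or_one_le_norm k) (by linarith) hr₁ hz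
  calc |∑' k : Fin m → ℤ, K (fun i => R * (k i : ℝ) - z i)|
      ≤ C₀ * ((1 - r₀) / 4) ^ (-q) * S * (1 + ‖z‖) ^ (-q) :=
        tsum_of_norm_bounded ((hsum.hasSum.mul_left _).mul_right _) hterm
    _ ≤ C₀ * ((1 - r₀) / 4) ^ (-q) * S * (1 + ‖z‖) ^ (-p) := by
        gcongr
        · exact le_add_of_nonneg_right (norm_nonneg z)
        · exact le_max_left _ _

/-- Key estimate (ii): on the box `{|z|_∞ ≤ R r₀}` the periodization
`K^R(z) = ∑_{k∈ℤᵐ} K(Rk − z)` of a Schwartz function decays like `(1+|z|_∞)^{−p}`,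
uniformly in `R > 2`.  (Here `Fin m → ℝ` carries the sup norm `‖·‖ = |·|_∞`.) -/
theorem periodization_decay
    (m : ℕ) (K : SchwartzMap (Fin m → ℝ) ℝ) (r₀ : ℝ) (hr₀ : 0 < r₀) (hr₁ : r₀ < 1)
    (p : ℝ) (hp : (m : ℝ) < p) :
    ∃ C > 0, ∀ R : ℝ, 2 < R → ∀ z : Fin m → ℝ, ‖z‖ ≤ R * r₀ →
      |∑' k : Fin m → ℤ, K (fun i => R * (k i : ℝ) - z i)| ≤ C * (1 + ‖z‖) ^ (-p) :=
  periodization_decay_general m K r₀ hr₁ p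
end

section
/- Let V be an m-dimensional real Euclidean space and f : V → ℝ a locally Lipschitz function homogeneous of degree k ≥ 1. Fix A₀ positive semidefinite with A₀^{1/2} ≥ μ₀·Id, μ₀ > 0, and R ≥ ‖A₀‖. Then there exists C = C(f,R,μ₀) > 0 such that for all positive semidefinite A with ‖A‖ ≤ R, |∫_V f dΓ_{A₀} − ∫_V f dΓ_A| ≤ C·‖A − A₀‖^{1/2}, where Γ_A denotes the centered Gaussian measure with covariance A. -/
open MeasureTheory ProbabilityTheory Matrix

/-- The positive semidefinite square root of a positive semidefinite matrix
(removed from Mathlib; restored with its former definition). -/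
noncomputable def Matrix.PosSemidef.sqrt {n : Type*} [Fintype n] [DecidableEq n]
    {A : Matrix n n ℝ} (hA : A.PosSemidef) : Matrix n n ℝ :=
  hA.1.eigenvectorUnitary.1 * diagonal ((↑) ∘ (√·) ∘ hA.1.eigenvalues) *
  (star hA.1.eigenvectorUnitary : Matrix n n ℝ)

/-- Frobenius norm on square real matrices. -/
noncomputable def frobNorm {m : ℕ} (X : Matrix (Fin m) (Fin m) ℝ) : ℝ :=
  Real.sqrt ((X * X).trace)

/-- The standard Gaussian measure on `ℝᵐ`. -/
noncomputable def stdGaussianPi (m : ℕ) : Measure (Fin m → ℝ) :=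
  Measure.pi fun _ : Fin m => ProbabilityTheory.gaussianReal 0 1

/-- The centered Gaussian measure on `ℝᵐ` with covariance (operator) `A ⪰ 0`,
realized as the pushforward of the standard Gaussian by `A^{1/2}`. -/
noncomputable def gaussianWithCov {m : ℕ} {A : Matrix (Fin m) (Fin m) ℝ}
    (hA : A.PosSemidef) : Measure (Fin m → ℝ) :=
  (stdGaussianPi m).map hA.sqrt.mulVec

/-! Since `Γ_A` is the image of the standard Gaussian `γ` under `A^{1/2}`, the integral is
`∫ f (A^{1/2} v) dγ(v)`. Homogeneity gives `f (T v) = ‖v‖ ^ k f (T (v / ‖v‖))`, and `f` is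
Lipschitz on the compact ball that these normalized points reach, so the integral is Lipschitz in
the operator `T`, with constant proportional to the `k`-th moment of `γ`. For square roots
`S₀ = A₀^{1/2}`, `S = A^{1/2}` and `D = S₀ - S` one has `A₀ - A = S₀ D + D S`, hence
`tr ((A₀ - A) D) = tr ((S₀ + S) D²) ≥ μ₀ ‖D‖²` and `μ₀ ‖S₀ - S‖ ≤ ‖A₀ - A‖`. Finally
`‖A - A₀‖ ≤ 2 R`, so a bound linear in `‖A - A₀‖` is also one in `‖A - A₀‖ ^ (1/2)`. -/

open scoped RealInnerProductSpace

namespace Matrix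

variable {n : Type*}

noncomputable def frobVec (X : Matrix n n ℝ) : EuclideanSpace ℝ (n × n) := WithLp.toLp 2 X.vec

lemma frobVec_sub (X Y : Matrix n n ℝ) : frobVec (X - Y) = frobVec X - frobVec Y := rfl

variable [Fintype n]

lemma inner_frobVec (X Y : Matrix n n ℝ) : ⟪frobVec X, frobVec Y⟫ = (Yᵀ * X).trace := by
  rw [frobVec, frobVec, EuclideanSpace.inner_toLp_toLp, star_trivial, vec_dotProduct_vec]

lemma trace_mul_le_of_isHermitian (X : Matrix n n ℝ) {Y : Matrix n n ℝ} (hY : Y.IsHermitian) :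
    (X * Y).trace ≤ ‖frobVec X‖ * ‖frobVec Y‖ :=
  calc (X * Y).trace = ⟪frobVec X, frobVec Y⟫ := by
        rw [inner_frobVec, (isHermitian_iff_isSymm.1 hY).eq, trace_mul_comm]
    _ ≤ _ := real_inner_le_norm _ _

lemma trace_mul_self_of_isHermitian {X : Matrix n n ℝ} (hX : X.IsHermitian) :
    (X * X).trace = ‖frobVec X‖ ^ 2 := by
  rw [← real_inner_self_eq_norm_sq, inner_frobVec, (isHermitian_iff_isSymm.1 hX).eq]

lemma frobNorm_eq_norm_frobVec {m : ℕ} {X : Matrix (Fin m) (Fin m) ℝ} (hX : X.IsHermitian) :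
    frobNorm X = ‖frobVec X‖ := by
  rw [frobNorm, trace_mul_self_of_isHermitian hX, Real.sqrt_sq (norm_nonneg _)]

lemma frobNorm_sub_le {m : ℕ} {X Y : Matrix (Fin m) (Fin m) ℝ} (hX : X.IsHermitian)
    (hY : Y.IsHermitian) : frobNorm (X - Y) ≤ frobNorm X + frobNorm Y := by
  simpa only [frobNorm_eq_norm_frobVec, hX, hY, hX.sub hY, frobVec_sub] using
    norm_sub_le (frobVec X) (frobVec Y)

lemma norm_mulVec_le (X : Matrix n n ℝ) (v : n → ℝ) :
    ‖X *ᵥ v‖ ≤ Fintype.card n * ‖frobVec X‖ * ‖v‖ := by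
  refine (pi_norm_le_iff_of_nonneg (x := X *ᵥ v) (by positivity)).2 fun i => ?_
  calc ‖(X *ᵥ v) i‖ ≤ ∑ j, ‖X i j‖ * ‖v j‖ := by
        simpa only [mulVec, dotProduct, norm_mul] using norm_sum_le Finset.univ fun j => X i j * v j
    _ ≤ ∑ _j : n, ‖frobVec X‖ * ‖v‖ := by
        gcongr with j
        · exact PiLp.norm_apply_le (frobVec X) (j, i)
        · exact norm_le_pi_norm v j
    _ = _ := by simp [mul_assoc]

noncomputable def mulVecCLM (X : Matrix n n ℝ) : (n → ℝ) →L[ℝ] (n → ℝ) :=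
  ContinuousLinearMap.mk X.mulVecLin

@[simp] lemma mulVecCLM_apply (X : Matrix n n ℝ) (v : n → ℝ) : mulVecCLM X v = X *ᵥ v := rfl

lemma mulVecCLM_sub (X Y : Matrix n n ℝ) : mulVecCLM (X - Y) = mulVecCLM X - mulVecCLM Y := by
  ext1 v; simp [sub_mulVec]

lemma norm_mulVecCLM_le (X : Matrix n n ℝ) :
    ‖mulVecCLM X‖ ≤ Fintype.card n * ‖frobVec X‖ :=
  ContinuousLinearMap.opNorm_le_bound _ (by positivity) (norm_mulVec_le X)

theorem mul_norm_frobVec_sub_le [DecidableEq n] {P Q : Matrix n n ℝ} (hP : P.IsHermitian)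
    (hQ : Q.IsHermitian) {μ : ℝ} (h : (P + Q - μ • 1).PosSemidef) :
    μ * ‖frobVec (P - Q)‖ ≤ ‖frobVec (P * P - Q * Q)‖ := by
  set D := P - Q
  have hD : D.IsHermitian := hP.sub hQ
  have htrace : ((P * P - Q * Q) * D).trace =
      (D * (P + Q - μ • 1) * D).trace + μ * ‖frobVec D‖ ^ 2 := by
    have hsq : P * P - Q * Q = P * D + D * Q := by simp only [D]; noncomm_ring
    rw [← trace_mul_self_of_isHermitian hD, hsq]
    simp only [Matrix.add_mul, Matrix.mul_add, Matrix.sub_mul, Matrix.mul_sub, trace_add,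
      trace_sub, Matrix.mul_smul, Matrix.smul_mul, Matrix.mul_one, trace_smul, smul_eq_mul,
      Matrix.mul_assoc]
    rw [trace_mul_comm D (P * D), Matrix.mul_assoc]
    ring
  have hnonneg : 0 ≤ (D * (P + Q - μ • 1) * D).trace := by
    simpa [(isHermitian_iff_isSymm.1 hD).eq] using (h.conjTranspose_mul_mul_same D).trace_nonneg
  have hCS := trace_mul_le_of_isHermitian (P * P - Q * Q) hD
  rcases (norm_nonneg (frobVec D)).eq_or_lt with h0 | h0
  · rw [← h0, mul_zero]; positivity
  · nlinarith

namespace PosSemidef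

variable [DecidableEq n] {A : Matrix n n ℝ}

lemma posSemidef_sqrt (hA : A.PosSemidef) : hA.sqrt.PosSemidef :=
  (posSemidef_diagonal_iff.2 fun _ => Real.sqrt_nonneg _).mul_mul_conjTranspose_same _

lemma sqrt_mul_self (hA : A.PosSemidef) : hA.sqrt * hA.sqrt = A := by
  conv_rhs => rw [hA.1.spectral_theorem, Unitary.conjStarAlgAut_apply]
  simp only [sqrt, Matrix.mul_assoc, ← Matrix.mul_assoc (star _ : Matrix n n ℝ),
    Unitary.coe_star_mul_self, Matrix.one_mul, ← Matrix.mul_assoc (diagonal _),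
    diagonal_mul_diagonal]
  congr 3
  funext i
  simp [Real.mul_self_sqrt (hA.eigenvalues_nonneg i)]

lemma norm_mulVecCLM_sqrt_le (hA : A.PosSemidef) :
    ‖mulVecCLM hA.sqrt‖ ≤ Fintype.card n * √(‖frobVec (1 : Matrix n n ℝ)‖ * ‖frobVec A‖) := by
  refine (norm_mulVecCLM_le _).trans ?_
  gcongr
  rw [← Real.sqrt_sq (norm_nonneg _), ← trace_mul_self_of_isHermitian hA.posSemidef_sqrt.1,
    hA.sqrt_mul_self]
  gcongr
  simpa using trace_mul_le_of_isHermitian 1 hA.1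

lemma norm_mulVecCLM_sqrt_sub_le {B : Matrix n n ℝ} (hA : A.PosSemidef) (hB : B.PosSemidef)
    {μ : ℝ} (hμ : 0 < μ) (hAμ : (hA.sqrt - μ • 1).PosSemidef) :
    ‖mulVecCLM hA.sqrt - mulVecCLM hB.sqrt‖ ≤ Fintype.card n / μ * ‖frobVec (A - B)‖ := by
  have h := mul_norm_frobVec_sub_le hA.posSemidef_sqrt.1 hB.posSemidef_sqrt.1
    (μ := μ) (by simpa only [sub_add_eq_add_sub] using hAμ.add hB.posSemidef_sqrt)
  rw [hA.sqrt_mul_self, hB.sqrt_mul_self] at h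
  rw [← mulVecCLM_sub]
  refine (norm_mulVecCLM_le _).trans ?_
  rw [div_mul_eq_mul_div, le_div_iff₀ hμ, mul_assoc]
  gcongr
  linarith

end PosSemidef

end Matrix

section Homogeneous

open Metric

variable {V E : Type*} [NormedAddCommGroup V] [NormedSpace ℝ V] [NormedAddCommGroup E]
  [NormedSpace ℝ E]

def IsPosHomogeneous (f : E → ℝ) (k : ℕ) : Prop :=
  ∀ t : ℝ, 0 ≤ t → ∀ x, f (t • x) = t ^ k * f x

variable {f : E → ℝ} {k : ℕ}

lemma IsPosHomogeneous.apply_eq_norm_pow_mul (hhom : IsPosHomogeneous f k) (T : V →L[ℝ] E)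
    (v : V) : f (T v) = ‖v‖ ^ k * f (T (‖v‖⁻¹ • v)) := by
  have hv : ‖v‖ • ‖v‖⁻¹ • v = v := by
    rcases eq_or_ne v 0 with rfl | hv
    · simp
    · exact smul_inv_smul₀ (norm_ne_zero_iff.2 hv) v
  rw [← hhom _ (norm_nonneg v), ← map_smul, hv]

lemma ContinuousLinearMap.apply_inv_norm_smul_mem_closedBall (T : V →L[ℝ] E) {r : ℝ}
    (hT : ‖T‖ ≤ r) (v : V) :
    T (‖v‖⁻¹ • v) ∈ closedBall 0 r := by
  have hu := mem_closedBall_zero_iff.1 (inv_norm_smul_mem_unitClosedBall v)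
  rw [mem_closedBall_zero_iff]
  calc ‖T (‖v‖⁻¹ • v)‖ ≤ r * ‖‖v‖⁻¹ • v‖ := T.le_of_opNorm_le hT _
    _ ≤ r := mul_le_of_le_one_right ((norm_nonneg T).trans hT) hu

lemma IsPosHomogeneous.abs_apply_le (hhom : IsPosHomogeneous f k) {r B : ℝ}
    (hB : ∀ x ∈ closedBall (0 : E) r, |f x| ≤ B) {T : V →L[ℝ] E} (hT : ‖T‖ ≤ r)
    (v : V) : |f (T v)| ≤ B * ‖v‖ ^ k := by
  rw [hhom.apply_eq_norm_pow_mul, abs_mul, abs_of_nonneg (by positivity), mul_comm]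
  gcongr
  exact hB _ (T.apply_inv_norm_smul_mem_closedBall hT v)

lemma IsPosHomogeneous.abs_apply_sub_apply_le (hhom : IsPosHomogeneous f k) {r : ℝ} {L : NNReal}
    (hL : LipschitzOnWith L f (closedBall 0 r)) {T₁ T₂ : V →L[ℝ] E} (h₁ : ‖T₁‖ ≤ r)
    (h₂ : ‖T₂‖ ≤ r) (v : V) : |f (T₁ v) - f (T₂ v)| ≤ L * ‖T₁ - T₂‖ * ‖v‖ ^ k := by
  rw [hhom.apply_eq_norm_pow_mul T₁, hhom.apply_eq_norm_pow_mul T₂,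
    ← mul_sub, abs_mul, abs_of_nonneg (by positivity), mul_comm]
  gcongr
  set u := ‖v‖⁻¹ • v
  calc |f (T₁ u) - f (T₂ u)| ≤ L * ‖T₁ u - T₂ u‖ := by
        simpa only [dist_eq_norm, Real.norm_eq_abs] using hL.dist_le_mul _
          (T₁.apply_inv_norm_smul_mem_closedBall h₁ v) _
          (T₂.apply_inv_norm_smul_mem_closedBall h₂ v)
    _ ≤ L * ‖T₁ - T₂‖ := by
        gcongr
        exact (T₁ - T₂).le_of_opNorm_le_of_le le_rfl
          (mem_closedBall_zero_iff.1 (inv_norm_smul_mem_unitClosedBall v)) |>.trans_eq (mul_one _)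

variable [MeasurableSpace V] [OpensMeasurableSpace V] {μ : Measure V}

lemma IsPosHomogeneous.integrable_apply (hhom : IsPosHomogeneous f k) (hfc : Continuous f)
    {r B : ℝ}
    (hB : ∀ x ∈ closedBall (0 : E) r, |f x| ≤ B) {T : V →L[ℝ] E} (hT : ‖T‖ ≤ r)
    (hμ : Integrable (fun v => ‖v‖ ^ k) μ) :
    Integrable (fun v => f (T v)) μ :=
  (hμ.const_mul B).mono' (hfc.comp T.continuous).aestronglyMeasurable
    (ae_of_all _ fun v => hhom.abs_apply_le hB hT v)

theorem IsPosHomogeneous.exists_abs_integral_apply_sub_le [ProperSpace E]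
    (hhom : IsPosHomogeneous f k) (hf : LocallyLipschitz f)
    (hμ : Integrable (fun v => ‖v‖ ^ k) μ) (r : ℝ) :
    ∃ C ≥ 0, ∀ T₁ T₂ : V →L[ℝ] E, ‖T₁‖ ≤ r → ‖T₂‖ ≤ r →
      |∫ v, f (T₁ v) ∂μ - ∫ v, f (T₂ v) ∂μ| ≤ C * ‖T₁ - T₂‖ := by
  obtain ⟨L, hL⟩ := hf.locallyLipschitzOn.exists_lipschitzOnWith_of_compact
    (isCompact_closedBall (0 : E) r)
  obtain ⟨B, hB⟩ := (isCompact_closedBall (0 : E) r).exists_bound_of_continuousOn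
    hf.continuous.continuousOn
  refine ⟨L * ∫ v, ‖v‖ ^ k ∂μ, by positivity, fun T₁ T₂ h₁ h₂ => ?_⟩
  have hint (T : V →L[ℝ] E) (hT : ‖T‖ ≤ r) : Integrable (fun v => f (T v)) μ :=
    hhom.integrable_apply hf.continuous hB hT hμ
  calc |∫ v, f (T₁ v) ∂μ - ∫ v, f (T₂ v) ∂μ| = |∫ v, (f (T₁ v) - f (T₂ v)) ∂μ| := by
        rw [integral_sub (hint T₁ h₁) (hint T₂ h₂)]
    _ ≤ ∫ v, |f (T₁ v) - f (T₂ v)| ∂μ := abs_integral_le_integral_abs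
    _ ≤ ∫ v, L * ‖T₁ - T₂‖ * ‖v‖ ^ k ∂μ :=
        integral_mono_of_nonneg (ae_of_all _ fun _ => abs_nonneg _)
          (hμ.const_mul _) (ae_of_all _ (hhom.abs_apply_sub_apply_le hL h₁ h₂))
    _ = L * (∫ v, ‖v‖ ^ k ∂μ) * ‖T₁ - T₂‖ := by
        rw [integral_const_mul]; ring

end Homogeneous

instance isGaussian_stdGaussianPi (m : ℕ) : IsGaussian (stdGaussianPi m) := by
  have : stdGaussianPi m =
      (stdGaussian (EuclideanSpace ℝ (Fin m))).map (EuclideanSpace.equiv (Fin m) ℝ) := by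
    rw [← map_pi_eq_stdGaussian, Measure.map_map (by fun_prop) (by fun_prop)]
    exact Measure.map_id.symm
  rw [this]
  infer_instance

lemma integrable_norm_pow_stdGaussianPi (m k : ℕ) :
    Integrable (fun v => ‖v‖ ^ k) (stdGaussianPi m) :=
  (IsGaussian.memLp_id _ k (by simp)).integrable_norm_pow'

lemma integral_gaussianWithCov {m : ℕ} {A : Matrix (Fin m) (Fin m) ℝ} (hA : A.PosSemidef)
    {f : (Fin m → ℝ) → ℝ} (hf : Continuous f) :
    ∫ v, f v ∂(gaussianWithCov hA) = ∫ v, f (mulVecCLM hA.sqrt v) ∂(stdGaussianPi m) :=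
  integral_map (mulVecCLM hA.sqrt).continuous.aemeasurable hf.aestronglyMeasurable

theorem gaussian_integral_sqrt_holder_general
    (m : ℕ) (f : (Fin m → ℝ) → ℝ) (hf : LocallyLipschitz f)
    (k : ℕ) (hhom : ∀ t : ℝ, 0 ≤ t → ∀ v, f (t • v) = t ^ k * f v)
    (A₀ : Matrix (Fin m) (Fin m) ℝ) (hA₀ : A₀.PosSemidef)
    (μ₀ : ℝ) (hμ₀ : 0 < μ₀)
    (hlb : (hA₀.sqrt - μ₀ • (1 : Matrix (Fin m) (Fin m) ℝ)).PosSemidef)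
    (R : ℝ) (hR : frobNorm A₀ ≤ R) :
    ∃ C > 0, ∀ (A : Matrix (Fin m) (Fin m) ℝ) (hA : A.PosSemidef), frobNorm A ≤ R →
      |(∫ v, f v ∂(gaussianWithCov hA₀)) - ∫ v, f v ∂(gaussianWithCov hA)|
        ≤ C * Real.sqrt (frobNorm (A - A₀)) := by
  obtain ⟨C, hC, hlip⟩ := IsPosHomogeneous.exists_abs_integral_apply_sub_le hhom hf
    (integrable_norm_pow_stdGaussianPi m k) (m * √(‖frobVec (1 : Matrix (Fin m) (Fin m) ℝ)‖ * R))
  have hop {A : Matrix (Fin m) (Fin m) ℝ} (hA : A.PosSemidef) (hAR : frobNorm A ≤ R) :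
      ‖mulVecCLM hA.sqrt‖ ≤ m * √(‖frobVec (1 : Matrix (Fin m) (Fin m) ℝ)‖ * R) := by
    refine (PosSemidef.norm_mulVecCLM_sqrt_le hA).trans ?_
    rw [Fintype.card_fin, ← frobNorm_eq_norm_frobVec hA.1]
    gcongr
  refine ⟨C * (m / μ₀) * √(2 * R) + 1, by positivity, fun A hA hAR => ?_⟩
  have hsqrt := PosSemidef.norm_mulVecCLM_sqrt_sub_le hA₀ hA hμ₀ hlb
  rw [frobVec_sub, norm_sub_rev (frobVec A₀), ← frobVec_sub,
    ← frobNorm_eq_norm_frobVec (hA.1.sub hA₀.1), Fintype.card_fin] at hsqrt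
  have hF_le : frobNorm (A - A₀) ≤ 2 * R := (frobNorm_sub_le hA.1 hA₀.1).trans (by linarith)
  set F := frobNorm (A - A₀)
  have hF_nonneg : 0 ≤ F := Real.sqrt_nonneg _
  rw [integral_gaussianWithCov hA₀ hf.continuous, integral_gaussianWithCov hA hf.continuous]
  calc _ ≤ C * ‖mulVecCLM hA₀.sqrt - mulVecCLM hA.sqrt‖ := hlip _ _ (hop hA₀ hR) (hop hA hAR)
    _ ≤ C * (m / μ₀) * F := by rw [mul_assoc]; gcongr
    _ = C * (m / μ₀) * (√F * √F) := by rw [Real.mul_self_sqrt hF_nonneg]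
    _ ≤ C * (m / μ₀) * (√(2 * R) * √F) := by gcongr
    _ ≤ (C * (m / μ₀) * √(2 * R) + 1) * √F := by nlinarith [Real.sqrt_nonneg F]

/-- Square-root Hölder continuity of Gaussian integrals of a homogeneous locally
Lipschitz function with respect to the covariance. -/
theorem gaussian_integral_sqrt_holder
    (m : ℕ) (f : (Fin m → ℝ) → ℝ) (hf : LocallyLipschitz f)
    (k : ℕ) (hk : 1 ≤ k) (hhom : ∀ t : ℝ, 0 ≤ t → ∀ v, f (t • v) = t ^ k * f v)
    (A₀ : Matrix (Fin m) (Fin m) ℝ) (hA₀ : A₀.PosSemidef)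
    (μ₀ : ℝ) (hμ₀ : 0 < μ₀)
    (hlb : (hA₀.sqrt - μ₀ • (1 : Matrix (Fin m) (Fin m) ℝ)).PosSemidef)
    (R : ℝ) (hR : frobNorm A₀ ≤ R) :
    ∃ C > 0, ∀ (A : Matrix (Fin m) (Fin m) ℝ) (hA : A.PosSemidef), frobNorm A ≤ R →
      |(∫ v, f v ∂(gaussianWithCov hA₀)) - ∫ v, f v ∂(gaussianWithCov hA)|
        ≤ C * Real.sqrt (frobNorm (A - A₀)) :=
  gaussian_integral_sqrt_holder_general m f hf k hhom A₀ hA₀ μ₀ hμ₀ hlb R hR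
end
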